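/- Let 1 ≤ p_B ≤ p_A ≤ p_H ≤ ∞, let a, b ∈ ℝ^d satisfy αᵀa ≤ β and αᵀb > β, let x* be a minimizer of x ↦ ‖x − a‖_{p_A} over 𝓗 and y* a minimizer of y ↦ ‖y − b‖_{p_B} over 𝓗, and suppose the Rapid Enough Transit Media condition holds for a and b: (i) ‖a − x*‖_{p_A} + ‖x − x*‖_{p_H} ≤ ‖x − a‖_{p_A} for all x ∈ 𝓗, and (ii) ‖b − y*‖_{p_B} + ‖y* − y‖_{p_H} ≤ ‖y − b‖_{p_B} for all y ∈ 𝓗. Then for all x, y ∈ 𝓗: ‖x − a‖_{p_A} + ‖x − y‖_{p_H} + ‖y − b‖_{p_B} ≥ ‖x* − a‖_{p_A} + ‖x* − y*‖_{p_H} + ‖y* − b‖_{p_B}; that is, the shortest path from a to b crossing through the hyperplane enters at x* and exits at y*. -/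

import Mathlib

open scoped ENNReal BigOperators

/-- The `ℓ_p` norm on `ℝ^d` for `p : ℝ≥0∞` (intended for `1 ≤ p ≤ ∞`). -/
noncomputable def lpNorm {d : ℕ} (p : ℝ≥0∞) (x : Fin d → ℝ) : ℝ :=
  if p = ∞ then ⨆ k, |x k| else (∑ k, |x k| ^ p.toReal) ^ (1 / p.toReal)

/-! By (i), a path entering `𝓗` at `x` is no shorter than one that first goes to `x*` and then
travels along `𝓗` from `x*` to `x`; symmetrically at the exit by (ii). The triangle inequality
for `‖·‖_{p_H}` then shortcuts the detour `x* → x → y → y*` on `𝓗` to `x* → y*`. -/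

theorem lpNorm_eq_norm_toLp {d : ℕ} {p : ℝ≥0∞} (hp : p ≠ 0) (x : Fin d → ℝ) :
    lpNorm p x = ‖WithLp.toLp p x‖ := by
  unfold lpNorm
  split_ifs with hinf
  · subst hinf
    simp [PiLp.norm_eq_ciSup]
  · simp [PiLp.norm_eq_sum (ENNReal.toReal_pos hp hinf)]

theorem lpNorm_sub_comm {d : ℕ} (p : ℝ≥0∞) (x y : Fin d → ℝ) :
    lpNorm p (x - y) = lpNorm p (y - x) := by
  simp only [lpNorm, Pi.sub_apply, abs_sub_comm]

theorem lpNorm_add_le {d : ℕ} {p : ℝ≥0∞} (hp : 1 ≤ p) (x y : Fin d → ℝ) :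
    lpNorm p (x + y) ≤ lpNorm p x + lpNorm p y := by
  have : Fact (1 ≤ p) := ⟨hp⟩
  have hp0 : p ≠ 0 := (zero_lt_one.trans_le hp).ne'
  simp only [lpNorm_eq_norm_toLp hp0, WithLp.toLp_add]
  exact norm_add_le _ _

theorem lpNorm_sub_le_of_detour {d : ℕ} {p : ℝ≥0∞} (hp : 1 ≤ p) (u v x y : Fin d → ℝ) :
    lpNorm p (u - v) ≤ lpNorm p (x - u) + lpNorm p (x - y) + lpNorm p (v - y) := by
  calc lpNorm p (u - v) = lpNorm p ((u - x) + ((x - y) + (y - v))) := by abel_nf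
    _ ≤ lpNorm p (u - x) + (lpNorm p (x - y) + lpNorm p (y - v)) :=
      (lpNorm_add_le hp _ _).trans (add_le_add_right (lpNorm_add_le hp _ _) _)
    _ = lpNorm p (x - u) + lpNorm p (x - y) + lpNorm p (v - y) := by
      rw [lpNorm_sub_comm p u, lpNorm_sub_comm p y]
      ring

theorem stmt_12_general {d : ℕ} (pA pB pH : ℝ≥0∞)
    (h1 : 1 ≤ pB) (hBA : pB ≤ pA) (hAH : pA ≤ pH)
    (α : Fin d → ℝ) (β : ℝ)
    (a b : Fin d → ℝ)
    (xs ys : Fin d → ℝ)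
    (retm1 : ∀ x : Fin d → ℝ, ∑ i, α i * x i = β →
      lpNorm pA (a - xs) + lpNorm pH (x - xs) ≤ lpNorm pA (x - a))
    (retm2 : ∀ y : Fin d → ℝ, ∑ i, α i * y i = β →
      lpNorm pB (b - ys) + lpNorm pH (ys - y) ≤ lpNorm pB (y - b)) :
    ∀ x y : Fin d → ℝ, ∑ i, α i * x i = β → ∑ i, α i * y i = β →
      lpNorm pA (xs - a) + lpNorm pH (xs - ys) + lpNorm pB (ys - b) ≤
        lpNorm pA (x - a) + lpNorm pH (x - y) + lpNorm pB (y - b) := by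
  intro x y hx hy
  have hdetour := lpNorm_sub_le_of_detour (h1.trans (hBA.trans hAH)) xs ys x y
  rw [lpNorm_sub_comm pA xs, lpNorm_sub_comm pB ys]
  linarith [retm1 x hx, retm2 y hy]

/-- Lemma 12: under the Rapid Enough Transit Media (RETM) condition and
`p_B ≤ p_A ≤ p_H`, the shortest path from `a` to `b` crossing through the
hyperplane enters at the projection `x*` of `a` and exits at the projection
`y*` of `b`. -/
theorem stmt_12 {d : ℕ} (pA pB pH : ℝ≥0∞)
    (h1 : 1 ≤ pB) (hBA : pB ≤ pA) (hAH : pA ≤ pH)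
    (α : Fin d → ℝ) (hα : α ≠ 0) (β : ℝ)
    (a b : Fin d → ℝ) (ha : ∑ i, α i * a i ≤ β) (hb : β < ∑ i, α i * b i)
    (xs ys : Fin d → ℝ) (hxs : ∑ i, α i * xs i = β) (hys : ∑ i, α i * ys i = β)
    (hxmin : ∀ x : Fin d → ℝ, ∑ i, α i * x i = β →
      lpNorm pA (xs - a) ≤ lpNorm pA (x - a))
    (hymin : ∀ y : Fin d → ℝ, ∑ i, α i * y i = β →
      lpNorm pB (ys - b) ≤ lpNorm pB (y - b))
    (retm1 : ∀ x : Fin d → ℝ, ∑ i, α i * x i = β →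
      lpNorm pA (a - xs) + lpNorm pH (x - xs) ≤ lpNorm pA (x - a))
    (retm2 : ∀ y : Fin d → ℝ, ∑ i, α i * y i = β →
      lpNorm pB (b - ys) + lpNorm pH (ys - y) ≤ lpNorm pB (y - b)) :
    ∀ x y : Fin d → ℝ, ∑ i, α i * x i = β → ∑ i, α i * y i = β →
      lpNorm pA (xs - a) + lpNorm pH (xs - ys) + lpNorm pB (ys - b) ≤
        lpNorm pA (x - a) + lpNorm pH (x - y) + lpNorm pB (y - b) :=
  stmt_12_general pA pB pH h1 hBA hAH α β a b xs ys retm1 retm2
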